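/- arXiv:1712.07104 — 4 statements merged into one kernel-verified Lean document; each statement's English description precedes it below -/
import Mathlib

section
/- Let E be a complex Banach space, n ∈ ℕ, r ∈ ℕ with r ≥ 1, and let f : (0, ∞) → E be continuous. Let p ∈ E and suppose there are C ≥ 0 and ε > 0 with ‖f(t) − p‖ ≤ C·exp(−ε t) for all t ≥ 1. Let q : ℕ → E and suppose that for every N ∈ ℕ there is C_N ≥ 0 such that ‖f(t) − Σ_{j=0}^{N−1} t^{(j−n)/r} • q_j‖ ≤ C_N · t^{(N−n)/r} for all t ∈ (0, 1]. Define q'_j := q_j for j ≠ n and q'_n := q_n − p. Then there exists F : ℂ → E such that: (i) F is differentiable (holomorphic) on ℂ \ {(n−j)/r : j ∈ ℕ}; (ii) for every z ∈ ℂ with Re(z) > n/r, the function t ↦ (t:ℂ)^{z−1} • (f(t) − p) is Bochner integrable on (0, ∞) and Γ(z) • F(z) = ∫_{(0,∞)} (t:ℂ)^{z−1} • (f(t) − p) dt; (iii) for every j ∈ ℕ, (z − (n−j)/r) • F(z) tends to (1/Γ((n−j)/r)) • q'_j as z → (n−j)/r within z ≠ (n−j)/r, where 1/Γ is the entire reciprocal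 Gamma function (so this limit is 0 when (n−j)/r is a non-positive integer); (iv) for every l ∈ ℕ, the function equal to F away from −l and to ((−1)^l · l!) • q'_{n+r·l} at −l is analytic at −l. -/
/-!
Split `f - p` at `t = 1`. On `(1, ∞)` the exponential decay makes its Mellin transform entire.
On `(0, 1]` subtract the first `N` terms of the expansion (subtracting `p` only turns the
`t ^ 0` coefficient `q n` into `q' n`): the remainder is `O(t ^ ((N - n) / r))`, so its Mellin
transform is holomorphic for `re z > (n - N) / r`, while `t ^ ((j - n) / r) • q' j` on `(0, 1]`
contributes `q' j / (z - (n - j) / r)`. These truncations agree where they overlap and glue to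
a continuation `G` of the Mellin transform with simple poles at `(n - j) / r` and residues
`q' j`. Put `F = G / Γ`: as `1 / Γ` is entire with a simple zero at `-l` and derivative
`(-1) ^ l * l!` there, `F` is holomorphic at `-l` with value `(-1) ^ l * l! • q' (n + r * l)`.
-/

open MeasureTheory Filter Topology Set Complex

section SimplePole

variable {E : Type*} [NormedAddCommGroup E] [NormedSpace ℂ E]

/-- `G` has at most a simple pole at `c`, with residue `v` (removable when `v = 0`). -/
def HasSimplePoleAt (G : ℂ → E) (c : ℂ) (v : E) : Prop :=
  AnalyticAt ℂ (Function.update (fun w => (w - c) • G w) c v) c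

theorem HasSimplePoleAt.of_eventually_eq {G H : ℂ → E} {c : ℂ} {v : E}
    (hH : AnalyticAt ℂ H c) (hG : ∀ᶠ w in 𝓝[≠] c, G w = (w - c)⁻¹ • v + H w) :
    HasSimplePoleAt G c v := by
  have hP : AnalyticAt ℂ (fun w => v + (w - c) • H w) c := by fun_prop
  refine hP.congr ?_
  filter_upwards [eventually_nhdsWithin_iff.mp hG] with w hw
  rcases eq_or_ne w c with rfl | hne
  · simp
  · rw [Function.update_of_ne hne, hw hne, smul_add, smul_smul,
      mul_inv_cancel₀ (sub_ne_zero.mpr hne), one_smul]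

theorem HasSimplePoleAt.congr {G G' : ℂ → E} {c : ℂ} {v : E} (hG : HasSimplePoleAt G c v)
    (hGG' : G =ᶠ[𝓝 c] G') : HasSimplePoleAt G' c v := by
  refine AnalyticAt.congr hG ?_
  filter_upwards [hGG'] with w hw
  rcases eq_or_ne w c with rfl | hne
  · simp
  · simp [Function.update_of_ne hne, hw]

theorem HasSimplePoleAt.tendsto_sub_smul_smul {G : ℂ → E} {c : ℂ} {v : E}
    (hG : HasSimplePoleAt G c v) {φ : ℂ → ℂ} (hφ : ContinuousAt φ c) :
    Tendsto (fun z => (z - c) • (φ z • G z)) (𝓝[≠] c) (𝓝 (φ c • v)) := by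
  have h := (hφ.smul hG.continuousAt).tendsto.mono_left (nhdsWithin_le_nhds (s := {c}ᶜ))
  simp only [Pi.smul_apply', Function.update_self] at h
  refine h.congr' ?_
  filter_upwards [self_mem_nhdsWithin] with z hz
  rw [Pi.smul_apply', Function.update_of_ne hz, smul_comm]

theorem HasSimplePoleAt.analyticAt_update_smul {G : ℂ → E} {c : ℂ} {v : E}
    (hG : HasSimplePoleAt G c v) {φ : ℂ → ℂ} (hφ : Differentiable ℂ φ) (hφc : φ c = 0) :
    AnalyticAt ℂ (Function.update (fun z => φ z • G z) c (deriv φ c • v)) c := by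
  have hslope : AnalyticAt ℂ (dslope φ c) c :=
    ((differentiableOn_dslope univ_mem).mpr hφ.differentiableOn).analyticAt univ_mem
  refine (hslope.smul hG).congr (Eventually.of_forall fun z => ?_)
  rcases eq_or_ne z c with rfl | hne
  · simp [dslope_same]
  · simp only [Pi.smul_apply', Function.update_of_ne hne]
    rw [dslope_of_ne _ hne, slope_def_module, hφc, sub_zero, smul_smul, smul_eq_mul,
      mul_comm (z - c)⁻¹, mul_assoc, inv_mul_cancel₀ (sub_ne_zero.mpr hne), mul_one]

theorem analyticAt_inv_sub_smul {c w : ℂ} (hw : w ≠ c) (v : E) :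
    AnalyticAt ℂ (fun z => (z - c)⁻¹ • v) w := by
  fun_prop (disch := exact sub_ne_zero.mpr hw)

end SimplePole

theorem Complex.hasDerivAt_inv_Gamma_neg_nat (l : ℕ) :
    HasDerivAt (fun z => (Gamma z)⁻¹) ((-1) ^ l * l.factorial) (-l) := by
  have hrec : ∀ w D, HasDerivAt (fun z => (Gamma z)⁻¹) D (w + 1) →
      HasDerivAt (fun z => (Gamma z)⁻¹) ((Gamma (w + 1))⁻¹ + w * D) w := by
    intro w D hD
    rw [show (fun z : ℂ => (Gamma z)⁻¹) = fun z => z * (Gamma (z + 1))⁻¹ from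
      funext one_div_Gamma_eq_self_mul_one_div_Gamma_add_one]
    simpa using (hasDerivAt_id' w).fun_mul (hD.comp_add_const w 1)
  induction l with
  | zero =>
    simpa using hrec 0 _ (by rw [zero_add]; exact (differentiable_one_div_Gamma 1).hasDerivAt)
  | succ l ih =>
    have h := hrec (-(l + 1 : ℕ)) _ (by push_cast at ih ⊢; simpa using ih)
    push_cast at h ⊢
    rw [show -((l : ℂ) + 1) + 1 = -l by ring, Gamma_neg_nat_eq_zero, inv_zero, zero_add] at h
    convert h using 1
    push_cast [Nat.factorial_succ]
    ring

theorem MeasureTheory.LocallyIntegrableOn.indicator {E : Type*} [NormedAddCommGroup E]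
    {f : ℝ → E} {s t : Set ℝ} {μ : Measure ℝ} (hf : LocallyIntegrableOn f s μ)
    (ht : MeasurableSet t) : LocallyIntegrableOn (t.indicator f) s μ := fun x hx =>
  let ⟨u, hu, hfu⟩ := hf x hx
  ⟨u, hu, hfu.indicator ht⟩

theorem isBigO_nhdsGT_zero_of_le_on_Ioc {E : Type*} [NormedAddCommGroup E] {u : ℝ → E}
    {b C : ℝ} (hu : ∀ t ∈ Ioc (0 : ℝ) 1, ‖u t‖ ≤ C * t ^ b) : u =O[𝓝[>] 0] (· ^ b) := by
  refine Asymptotics.IsBigO.of_bound C ?_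
  filter_upwards [Ioc_mem_nhdsGT zero_lt_one] with t ht
  rw [Real.norm_of_nonneg (Real.rpow_nonneg ht.1.le _)]
  exact hu t ht

noncomputable section MellinContinuation

variable {E : Type*} [NormedAddCommGroup E] [NormedSpace ℂ E]

theorem HasMellin.smul_const [CompleteSpace E] {φ : ℝ → ℂ} {z m : ℂ} (h : HasMellin φ z m)
    (v : E) : HasMellin (fun t => φ t • v) z (m • v) := by
  refine ⟨?_, ?_⟩
  · simpa only [MellinConvergent, IntegrableOn, smul_assoc] using h.1.smul_const v
  · simp only [mellin, ← smul_assoc, smul_eq_mul]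
    rw [integral_smul_const, ← h.2]
    rfl

theorem hasMellin_sum {ι : Type*} (u : Finset ι) {f : ι → ℝ → E} {m : ι → E} {z : ℂ}
    (h : ∀ i ∈ u, HasMellin (f i) z (m i)) :
    HasMellin (fun t => ∑ i ∈ u, f i t) z (∑ i ∈ u, m i) := by
  refine ⟨?_, ?_⟩
  · simpa only [MellinConvergent, IntegrableOn, Finset.smul_sum] using
      integrable_finsetSum u fun i hi => (h i hi).1
  · simp only [mellin, Finset.smul_sum]
    rw [integral_finsetSum u fun i hi => (h i hi).1]
    exact Finset.sum_congr rfl fun i hi => (h i hi).2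

theorem HasMellin.congr {f f' : ℝ → E} {z : ℂ} {m : E} (h : HasMellin f z m)
    (hff' : EqOn f f' (Ioi 0)) : HasMellin f' z m := by
  have hint : EqOn (fun t : ℝ => (t : ℂ) ^ (z - 1) • f t)
      (fun t => (t : ℂ) ^ (z - 1) • f' t) (Ioi 0) := fun t ht => by simp only [hff' ht]
  exact ⟨h.1.congr_fun hint measurableSet_Ioi,
    (setIntegral_congr_fun measurableSet_Ioi hint).symm.trans h.2⟩

theorem hasMellin_indicator_Ioc_rpow_smul [CompleteSpace E] {x : ℝ} {z : ℂ} (hz : x < z.re)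
    (v : E) :
    HasMellin ((Ioc 0 1).indicator fun t => ((t ^ (-x) : ℝ) : ℂ) • v) z ((z - x)⁻¹ • v) := by
  have h := (hasMellin_cpow_Ioc (-x : ℂ) (s := z) (by simpa using hz)).smul_const v
  rw [one_div, ← sub_eq_add_neg] at h
  convert h using 1
  funext t
  by_cases ht : t ∈ Ioc (0 : ℝ) 1
  · rw [indicator_of_mem ht, indicator_of_mem ht, ofReal_cpow ht.1.le, ofReal_neg]
  · simp [indicator_of_notMem ht]

variable (g : ℝ → E) (s : ℕ → ℝ) (a : ℕ → E)

def expansionError (N : ℕ) (t : ℝ) : E :=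
  g t - ∑ j ∈ Finset.range N, ((t ^ (-s j) : ℝ) : ℂ) • a j

def expansionRemainder (N : ℕ) : ℝ → E :=
  (Ioc 0 1).indicator (expansionError g s a N)

/-- For `s N < re z` this is the Mellin transform of `g` continued past its abscissa: the first
`N` terms of the expansion are integrated explicitly over `(0, 1]`. -/
def truncatedMellin (N : ℕ) (z : ℂ) : E :=
  ∑ j ∈ Finset.range N, (z - s j)⁻¹ • a j + mellin (expansionRemainder g s a N) z
    + mellin ((Ioi 1).indicator g) z

variable {g s a}

theorem expansionError_sub_const {a' : ℕ → E} {p : E} {k N : ℕ} (hkN : k < N) (hsk : s k = 0)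
    (ha' : ∀ j, j ≠ k → a' j = a j) (ha'k : a' k = a k - p) :
    expansionError (fun t => g t - p) s a' N = expansionError g s a N := by
  funext t
  have hk := Finset.mem_range.mpr hkN
  simp only [expansionError]
  rw [← Finset.add_sum_erase _ _ hk, ← Finset.add_sum_erase (Finset.range N) _ hk,
    Finset.sum_congr rfl fun j hj => by rw [ha' j (Finset.ne_of_mem_erase hj)], ha'k, hsk,
    neg_zero, Real.rpow_zero, ofReal_one, one_smul, one_smul]
  abel

theorem expansionRemainder_eq_sub_sum {N M : ℕ} (hNM : N ≤ M) (t : ℝ) :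
    expansionRemainder g s a M t = expansionRemainder g s a N t -
      ∑ j ∈ Finset.Ico N M, (Ioc 0 1).indicator (fun t => ((t ^ (-s j) : ℝ) : ℂ) • a j) t := by
  by_cases ht : t ∈ Ioc (0 : ℝ) 1
  · simp only [expansionRemainder, expansionError, indicator_of_mem ht,
      ← Finset.sum_range_add_sum_Ico _ hNM]
    abel
  · simp [expansionRemainder, indicator_of_notMem ht]

theorem eqOn_sum_add_expansionRemainder_add (N : ℕ) :
    EqOn (fun t => ∑ j ∈ Finset.range N,
        (Ioc 0 1).indicator (fun t => ((t ^ (-s j) : ℝ) : ℂ) • a j) t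
        + expansionRemainder g s a N t + (Ioi 1).indicator g t) g (Ioi 0) := by
  intro t ht
  by_cases ht1 : t ≤ 1
  · have hmem : t ∈ Ioc (0 : ℝ) 1 := ⟨ht, ht1⟩
    simp only [expansionRemainder, expansionError, indicator_of_mem hmem]
    rw [indicator_of_notMem (show t ∉ Ioi (1 : ℝ) from not_lt.mpr ht1)]
    abel
  · have hnot : t ∉ Ioc (0 : ℝ) 1 := fun h => ht1 h.2
    simp only [expansionRemainder, indicator_of_notMem hnot, Finset.sum_const_zero, zero_add]
    exact indicator_of_mem (show t ∈ Ioi (1 : ℝ) from not_le.mp ht1) g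

theorem mellin_differentiableAt_expansionRemainder (hg : LocallyIntegrableOn g (Ioi 0))
    {N : ℕ} (hN : expansionError g s a N =O[𝓝[>] 0] (· ^ (-s N))) {z : ℂ}
    (hz : s N < z.re) :
    MellinConvergent (expansionRemainder g s a N) z ∧
      DifferentiableAt ℂ (mellin (expansionRemainder g s a N)) z := by
  have hloc : LocallyIntegrableOn (expansionRemainder g s a N) (Ioi 0) := by
    refine (hg.sub ?_).indicator measurableSet_Ioc
    refine ContinuousOn.locallyIntegrableOn ?_ measurableSet_Ioi
    refine continuousOn_finsetSum _ fun j _ => ContinuousOn.smul ?_ continuousOn_const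
    exact continuous_ofReal.comp_continuousOn
      (continuousOn_id.rpow_const fun t ht => Or.inl (ne_of_gt ht))
  have htop : expansionRemainder g s a N =O[atTop] (· ^ (-(z.re + 1))) := by
    refine EventuallyEq.trans_isBigO ?_ (Asymptotics.isBigO_zero _ _)
    filter_upwards [eventually_gt_atTop 1] with t ht
    exact indicator_of_notMem (fun h => h.2.not_gt ht) _
  have hbot : expansionRemainder g s a N =O[𝓝[>] 0] (· ^ (-s N)) := by
    refine EventuallyEq.trans_isBigO ?_ hN
    filter_upwards [Ioc_mem_nhdsGT zero_lt_one] with t ht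
    exact indicator_of_mem ht _
  exact ⟨mellinConvergent_of_isBigO_rpow hloc htop (lt_add_one _) hbot hz,
    mellin_differentiableAt_of_isBigO_rpow hloc htop (lt_add_one _) hbot hz⟩

theorem mellin_differentiableAt_indicator_Ioi_one (hg : LocallyIntegrableOn g (Ioi 0))
    {ε : ℝ} (hε : 0 < ε) (hg_top : g =O[atTop] fun t => Real.exp (-ε * t)) (z : ℂ) :
    MellinConvergent ((Ioi 1).indicator g) z ∧
      DifferentiableAt ℂ (mellin ((Ioi 1).indicator g)) z := by
  have hloc := hg.indicator (measurableSet_Ioi (a := (1 : ℝ)))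
  have htop : (Ioi 1).indicator g =O[atTop] fun t => Real.exp (-ε * t) := by
    refine EventuallyEq.trans_isBigO ?_ hg_top
    filter_upwards [eventually_gt_atTop 1] with t ht
    exact indicator_of_mem ht _
  have hbot : (Ioi 1).indicator g =O[𝓝[>] 0] (· ^ (-(z.re - 1))) := by
    refine EventuallyEq.trans_isBigO ?_ (Asymptotics.isBigO_zero _ _)
    filter_upwards [Ioc_mem_nhdsGT zero_lt_one] with t ht
    exact indicator_of_notMem (fun h => ht.2.not_gt h) _
  exact ⟨mellinConvergent_of_isBigO_rpow_exp hε hloc htop hbot (sub_one_lt _),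
    mellin_differentiableAt_of_isBigO_rpow_exp hε hloc htop hbot (sub_one_lt _)⟩

theorem truncatedMellin_eq_of_le [CompleteSpace E] (hs : Antitone s)
    (hg : LocallyIntegrableOn g (Ioi 0)) {N M : ℕ}
    (hN : expansionError g s a N =O[𝓝[>] 0] (· ^ (-s N))) {z : ℂ} (hz : s N < z.re)
    (hNM : N ≤ M) : truncatedMellin g s a M z = truncatedMellin g s a N z := by
  have hterms := hasMellin_sum (Finset.Ico N M) fun j hj =>
    hasMellin_indicator_Ioc_rpow_smul ((hs (Finset.mem_Ico.mp hj).1).trans_lt hz) (a j)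
  have hrem : mellin (expansionRemainder g s a M) z = mellin (expansionRemainder g s a N) z
      - ∑ j ∈ Finset.Ico N M, (z - s j)⁻¹ • a j := by
    rw [funext (expansionRemainder_eq_sub_sum hNM), ← hterms.2]
    exact (hasMellin_sub (mellin_differentiableAt_expansionRemainder hg hN hz).1 hterms.1).2
  rw [truncatedMellin, truncatedMellin, hrem, ← Finset.sum_range_add_sum_Ico _ hNM]
  abel

theorem truncatedMellin_eq [CompleteSpace E] (hs : Antitone s)
    (hg : LocallyIntegrableOn g (Ioi 0)) {N M : ℕ}
    (hN : expansionError g s a N =O[𝓝[>] 0] (· ^ (-s N)))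
    (hM : expansionError g s a M =O[𝓝[>] 0] (· ^ (-s M))) {z : ℂ} (hzN : s N < z.re)
    (hzM : s M < z.re) : truncatedMellin g s a N z = truncatedMellin g s a M z := by
  rcases le_total N M with hNM | hMN
  · exact (truncatedMellin_eq_of_le hs hg hN hzN hNM).symm
  · exact truncatedMellin_eq_of_le hs hg hM hzM hMN

theorem hasMellin_truncatedMellin [CompleteSpace E] (hs : Antitone s)
    (hg : LocallyIntegrableOn g (Ioi 0)) {ε : ℝ} (hε : 0 < ε)
    (hg_top : g =O[atTop] fun t => Real.exp (-ε * t)) {N : ℕ}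
    (hN : expansionError g s a N =O[𝓝[>] 0] (· ^ (-s N))) {z : ℂ} (hz : s 0 < z.re) :
    HasMellin g z (truncatedMellin g s a N z) := by
  have hterms := hasMellin_sum (Finset.range N) fun j _ =>
    hasMellin_indicator_Ioc_rpow_smul ((hs (Nat.zero_le j)).trans_lt hz) (a j)
  have hrem :=
    (mellin_differentiableAt_expansionRemainder hg hN ((hs (Nat.zero_le N)).trans_lt hz)).1
  have h := hasMellin_add (hasMellin_add hterms.1 hrem).1
    (mellin_differentiableAt_indicator_Ioi_one hg hε hg_top z).1
  rw [(hasMellin_add hterms.1 hrem).2, hterms.2] at h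
  exact h.congr (eqOn_sum_add_expansionRemainder_add N)

theorem differentiableAt_truncatedMellin (hg : LocallyIntegrableOn g (Ioi 0)) {ε : ℝ}
    (hε : 0 < ε) (hg_top : g =O[atTop] fun t => Real.exp (-ε * t)) {N : ℕ}
    (hN : expansionError g s a N =O[𝓝[>] 0] (· ^ (-s N))) {z : ℂ} (hz : s N < z.re)
    (hpole : ∀ j < N, z ≠ s j) : DifferentiableAt ℂ (truncatedMellin g s a N) z := by
  refine (DifferentiableAt.add ?_ (mellin_differentiableAt_expansionRemainder hg hN hz).2).add
    (mellin_differentiableAt_indicator_Ioi_one hg hε hg_top z).2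
  exact DifferentiableAt.fun_sum fun j hj =>
    (analyticAt_inv_sub_smul (hpole j (Finset.mem_range.mp hj)) (a j)).differentiableAt

theorem hasSimplePoleAt_truncatedMellin [CompleteSpace E] (hs : StrictAnti s)
    (hg : LocallyIntegrableOn g (Ioi 0)) {ε : ℝ} (hε : 0 < ε)
    (hg_top : g =O[atTop] fun t => Real.exp (-ε * t)) {N j : ℕ}
    (hN : expansionError g s a N =O[𝓝[>] 0] (· ^ (-s N))) (hj : s N < s j) :
    HasSimplePoleAt (truncatedMellin g s a N) (s j) (a j) := by
  have hjN : j ∈ Finset.range N := Finset.mem_range.mpr (hs.lt_iff_gt.mp hj)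
  have hsum : AnalyticAt ℂ
      (fun w : ℂ => ∑ i ∈ (Finset.range N).erase j, (w - s i)⁻¹ • a i) (s j) :=
    Finset.analyticAt_fun_sum _ fun i hi => analyticAt_inv_sub_smul
      (by exact_mod_cast hs.injective.ne (Finset.ne_of_mem_erase hi).symm) (a i)
  have hrem : AnalyticAt ℂ (mellin (expansionRemainder g s a N)) (s j) :=
    DifferentiableOn.analyticAt (fun w hw =>
        (mellin_differentiableAt_expansionRemainder hg hN hw).2.differentiableWithinAt)
      ((isOpen_lt continuous_const continuous_re).mem_nhds (by simpa using hj))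
  have htail : AnalyticAt ℂ (mellin ((Ioi 1).indicator g)) (s j) :=
    Differentiable.analyticAt
      (fun w => (mellin_differentiableAt_indicator_Ioi_one hg hε hg_top w).2) _
  refine .of_eventually_eq ((hsum.add hrem).add htail) (Eventually.of_forall fun w => ?_)
  rw [truncatedMellin, ← Finset.add_sum_erase _ _ hjN, Pi.add_apply, Pi.add_apply]
  abel

theorem exists_mellin_continuation [CompleteSpace E] (hg : LocallyIntegrableOn g (Ioi 0))
    {ε : ℝ} (hε : 0 < ε) (hg_top : g =O[atTop] fun t => Real.exp (-ε * t)) (hs : StrictAnti s)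
    (hs_bot : Tendsto s atTop atBot)
    (hexp : ∀ᶠ N in atTop, expansionError g s a N =O[𝓝[>] 0] (· ^ (-s N))) :
    ∃ G : ℂ → E, (∀ z : ℂ, (∀ j, z ≠ s j) → DifferentiableAt ℂ G z) ∧
      (∀ z : ℂ, s 0 < z.re → HasMellin g z (G z)) ∧
      ∀ j, HasSimplePoleAt G (s j) (a j) := by
  choose N hN hsN using fun x : ℝ => (hexp.and (hs_bot.eventually_lt_atBot x)).exists
  have hG : ∀ (z : ℂ) (M : ℕ), expansionError g s a M =O[𝓝[>] 0] (· ^ (-s M)) →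
      s M < z.re → (fun w => truncatedMellin g s a (N w.re) w) =ᶠ[𝓝 z] truncatedMellin g s a M :=
    fun z M hM hzM => by
      filter_upwards [(isOpen_lt continuous_const continuous_re).mem_nhds hzM] with w hw
      exact truncatedMellin_eq hs.antitone hg (hN _) hM (hsN _) hw
  refine ⟨fun z => truncatedMellin g s a (N z.re) z, fun z hz => ?_, fun z hz => ?_,
    fun j => ?_⟩
  · exact (differentiableAt_truncatedMellin hg hε hg_top (hN z.re) (hsN z.re)
      fun j _ => hz j).congr_of_eventuallyEq (hG z _ (hN z.re) (hsN z.re))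
  · exact hasMellin_truncatedMellin hs.antitone hg hε hg_top (hN z.re) hz
  · exact (hasSimplePoleAt_truncatedMellin hs hg hε hg_top (hN (s j)) (hsN (s j))).congr
      (hG _ _ (hN (s j)) (by simpa using hsN (s j))).symm

end MellinContinuation

theorem strictAnti_sub_div (n : ℝ) {r : ℝ} (hr : 0 < r) :
    StrictAnti fun j : ℕ => (n - j) / r :=
  fun _ _ hij => div_lt_div_of_pos_right (sub_lt_sub_left (Nat.cast_lt.mpr hij) n) hr

theorem tendsto_sub_div_atBot (n : ℝ) {r : ℝ} (hr : 0 < r) :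
    Tendsto (fun j : ℕ => (n - j) / r) atTop atBot :=
  (tendsto_atBot_add_const_left _ n
    (tendsto_neg_atTop_atBot.comp tendsto_natCast_atTop_atTop)).atBot_div_const hr

theorem stmt_4_general {E : Type*} [NormedAddCommGroup E] [NormedSpace ℂ E] [CompleteSpace E]
    (n r : ℕ) (hr : 1 ≤ r)
    (f : ℝ → E) (hf : ContinuousOn f (Set.Ioi 0))
    (p : E) (C ε : ℝ) (hε : 0 < ε)
    (hlarge : ∀ t : ℝ, 1 ≤ t → ‖f t - p‖ ≤ C * Real.exp (-ε * t))
    (q : ℕ → E)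
    (hsmall : ∀ N : ℕ, ∃ CN : ℝ, 0 ≤ CN ∧ ∀ t ∈ Set.Ioc (0 : ℝ) 1,
      ‖f t - ∑ j ∈ Finset.range N, ((t ^ (((j : ℝ) - n) / r) : ℝ) : ℂ) • q j‖
        ≤ CN * t ^ (((N : ℝ) - n) / r))
    (q' : ℕ → E) (hq' : ∀ j, j ≠ n → q' j = q j) (hq'n : q' n = q n - p) :
    ∃ F : ℂ → E,
      (∀ z : ℂ, (∀ j : ℕ, z ≠ ((n : ℂ) - j) / r) → DifferentiableAt ℂ F z) ∧
      (∀ z : ℂ, (n : ℝ) / r < z.re →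
        IntegrableOn (fun t : ℝ => (t : ℂ) ^ (z - 1) • (f t - p)) (Set.Ioi 0) ∧
        Complex.Gamma z • F z
          = ∫ t in Set.Ioi (0 : ℝ), (t : ℂ) ^ (z - 1) • (f t - p)) ∧
      (∀ j : ℕ, Tendsto (fun z : ℂ => (z - ((n : ℂ) - j) / r) • F z)
        (nhdsWithin (((n : ℂ) - j) / r) {((n : ℂ) - j) / r}ᶜ)
        (nhds ((Complex.Gamma (((n : ℂ) - j) / r))⁻¹ • q' j))) ∧
      (∀ l : ℕ, AnalyticAt ℂ
        (Function.update F (-(l : ℂ))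
          (((-1 : ℂ) ^ l * (l.factorial : ℂ)) • q' (n + r * l)))
        (-(l : ℂ))) := by
  have hr0 : (0 : ℝ) < r := by exact_mod_cast hr
  set s : ℕ → ℝ := fun j => ((n : ℝ) - j) / r
  have hs_cast (j : ℕ) : ((s j : ℝ) : ℂ) = ((n : ℂ) - j) / r := by push_cast [s]; rfl
  have hdecay : (fun t => f t - p) =O[atTop] fun t => Real.exp (-ε * t) :=
    .of_bound C (by
      filter_upwards [eventually_ge_atTop 1] with t ht
      rw [Real.norm_of_nonneg (Real.exp_pos _).le]
      exact hlarge t ht)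
  have hexp : ∀ᶠ N in atTop,
      expansionError (fun t => f t - p) s q' N =O[𝓝[>] 0] (· ^ (-s N)) := by
    filter_upwards [eventually_gt_atTop n] with N hN
    obtain ⟨CN, -, hCN⟩ := hsmall N
    have hs_neg (j : ℕ) : -s j = ((j : ℝ) - n) / r := by simp only [s]; ring
    rw [expansionError_sub_const hN (by simp [s]) hq' hq'n, hs_neg]
    exact isBigO_nhdsGT_zero_of_le_on_Ioc fun t ht => by
      simpa only [expansionError, hs_neg] using hCN t ht
  obtain ⟨G, hG_diff, hG_mellin, hG_pole⟩ := exists_mellin_continuation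
    ((hf.sub continuousOn_const).locallyIntegrableOn measurableSet_Ioi) hε hdecay
    (strictAnti_sub_div n hr0) (tendsto_sub_div_atBot n hr0) hexp
  refine ⟨fun z => (Gamma z)⁻¹ • G z, fun z hz => ?_, fun z hz => ?_, fun j => ?_, fun l => ?_⟩
  · exact (differentiable_one_div_Gamma z).smul (hG_diff z fun j => by rw [hs_cast]; exact hz j)
  · obtain ⟨hconv, hval⟩ := hG_mellin z (by simpa [s] using hz)
    have hΓ : Gamma z ≠ 0 := Gamma_ne_zero_of_re_pos (lt_of_le_of_lt (by positivity) hz)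
    exact ⟨hconv, by rw [smul_smul, mul_inv_cancel₀ hΓ, one_smul, ← hval]; rfl⟩
  · rw [← hs_cast]
    exact (hG_pole j).tendsto_sub_smul_smul (differentiable_one_div_Gamma _).continuousAt
  · have hsl : ((s (n + r * l) : ℝ) : ℂ) = -l := by
      rw [hs_cast, div_eq_iff (by exact_mod_cast hr0.ne')]
      push_cast
      ring
    have h := (hG_pole (n + r * l)).analyticAt_update_smul differentiable_one_div_Gamma
      (by rw [hsl, Gamma_neg_nat_eq_zero, inv_zero])
    rwa [hsl, (hasDerivAt_inv_Gamma_neg_nat l).deriv] at h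

/-- Analytic core of Theorem 2.3: meromorphic continuation of the Mellin transform of a
function `f` admitting a heat-kernel-type asymptotic expansion `Σ t^{(j-n)/r} q_j` as
`t → 0⁺` and converging exponentially fast to `p` as `t → ∞`.  The continuation `F` is
holomorphic away from `(n-j)/r`, satisfies `Γ(z) F(z) = ∫_0^∞ t^{z-1}(f(t) - p) dt` for
`Re z > n/r`, has at most simple poles at `(n-j)/r` with residues `q'_j / Γ((n-j)/r)`
(interpreted via the entire reciprocal Gamma function), and takes the values
`(-1)^l l! q'_{n+rl}` at the points `-l`. -/
theorem stmt_4 {E : Type*} [NormedAddCommGroup E] [NormedSpace ℂ E] [CompleteSpace E]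
    (n r : ℕ) (hr : 1 ≤ r)
    (f : ℝ → E) (hf : ContinuousOn f (Set.Ioi 0))
    (p : E) (C ε : ℝ) (hC : 0 ≤ C) (hε : 0 < ε)
    (hlarge : ∀ t : ℝ, 1 ≤ t → ‖f t - p‖ ≤ C * Real.exp (-ε * t))
    (q : ℕ → E)
    (hsmall : ∀ N : ℕ, ∃ CN : ℝ, 0 ≤ CN ∧ ∀ t ∈ Set.Ioc (0 : ℝ) 1,
      ‖f t - ∑ j ∈ Finset.range N, ((t ^ (((j : ℝ) - n) / r) : ℝ) : ℂ) • q j‖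
        ≤ CN * t ^ (((N : ℝ) - n) / r))
    (q' : ℕ → E) (hq' : ∀ j, j ≠ n → q' j = q j) (hq'n : q' n = q n - p) :
    ∃ F : ℂ → E,
      (∀ z : ℂ, (∀ j : ℕ, z ≠ ((n : ℂ) - j) / r) → DifferentiableAt ℂ F z) ∧
      (∀ z : ℂ, (n : ℝ) / r < z.re →
        IntegrableOn (fun t : ℝ => (t : ℂ) ^ (z - 1) • (f t - p)) (Set.Ioi 0) ∧
        Complex.Gamma z • F z
          = ∫ t in Set.Ioi (0 : ℝ), (t : ℂ) ^ (z - 1) • (f t - p)) ∧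
      (∀ j : ℕ, Tendsto (fun z : ℂ => (z - ((n : ℂ) - j) / r) • F z)
        (nhdsWithin (((n : ℂ) - j) / r) {((n : ℂ) - j) / r}ᶜ)
        (nhds ((Complex.Gamma (((n : ℂ) - j) / r))⁻¹ • q' j))) ∧
      (∀ l : ℕ, AnalyticAt ℂ
        (Function.update F (-(l : ℂ))
          (((-1 : ℂ) ^ l * (l.factorial : ℂ)) • q' (n + r * l)))
        (-(l : ℂ))) :=
  stmt_4_general n r hr f hf p C ε hε hlarge q hsmall q' hq' hq'n
end

section
/- Let λ : ℕ → ℝ with λ_j ≥ 0 for all j, and suppose that for every t > 0 the series θ(t) := Σ_j exp(−t λ_j) converges. Let k be the (necessarily finite) number of indices j with λ_j = 0, and let n, r > 0 be real numbers and C ≥ 0 with θ(t) ≤ C·t^{−n/r} for all t ∈ (0, 1]. Then for every z ∈ ℂ with Re(z) > n/r: the series Σ_{j : λ_j > 0} λ_j^{−z} converges absolutely, the function t ↦ (t:ℂ)^{z−1} · (θ(t) − k) is integrable on (0, ∞), and Σ_{j : λ_j > 0} λ_j^{−z} = (1/Γ(z)) · ∫_{(0,∞)} (t:ℂ)^{z−1}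 · (θ(t) − k) dt. -/
/-!
Removing the kernel turns `θ(t) - k` into the heat trace `Θ(t) = ∑_{λ_j > 0} e^{-tλ_j}` of the
positive spectrum. On `(0, 1]` the hypothesis bounds `t^{σ-1} Θ(t)` by `C t^{σ-1-n/r}`, which is
integrable since `σ > n/r`; on `[1, ∞)` the positive eigenvalues are bounded below by some
`δ > 0` (they tend to `∞`), so `Θ(t) ≤ e^{-δ(t-1)} Θ(1)` decays exponentially. Hence
`t^{σ-1} Θ(t)` is integrable for `σ = Re z`, and since `∫ t^{σ-1} e^{-tλ} dt = Γ(σ) λ^{-σ}`, the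
partial sums of `Γ(σ) ∑ λ_j^{-σ}` are bounded by its integral. Absolute convergence then allows
termwise integration of the Mellin transform of `Θ`.
-/

open MeasureTheory Real Set Filter

noncomputable def heatTrace {ι : Type*} (p : ι → ℝ) (t : ℝ) : ℝ := ∑' i, rexp (-t * p i)

section HeatTrace

variable {ι : Type*} {p : ι → ℝ}

lemma heatTrace_nonneg (p : ι → ℝ) (t : ℝ) : 0 ≤ heatTrace p t :=
  tsum_nonneg fun _ ↦ (exp_pos _).le

lemma measurable_heatTrace [Countable ι] (p : ι → ℝ) : Measurable (heatTrace p) :=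
  Measurable.tsum fun _ ↦ by fun_prop

lemma hasSum_exp_pos_heatTrace_sub_card (hp : ∀ i, 0 ≤ p i) {t : ℝ}
    (hsum : Summable fun i ↦ rexp (-t * p i)) :
    HasSum (fun i : {i // 0 < p i} ↦ rexp (-t * p i))
      (heatTrace p t - Nat.card {i | p i = 0}) := by
  have hkernel : ∑' i : {i | p i = 0}, rexp (-t * p i) = Nat.card {i | p i = 0} := by
    rw [tsum_congr fun i ↦ by rw [i.2.out, mul_zero, exp_zero], tsum_const, nsmul_one]
  have hpos : {i | p i = 0}ᶜ = {i | 0 < p i} := by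
    ext i
    simp [(hp i).lt_iff_ne']
  rw [heatTrace, ← hsum.tsum_subtype_add_tsum_subtype_compl {i | p i = 0}, hkernel, hpos,
    add_sub_cancel_left]
  exact (hsum.subtype _).hasSum

lemma exists_pos_forall_le_of_summable_exp (hp : ∀ i, 0 < p i)
    (hsum : Summable fun i ↦ rexp (-p i)) : ∃ δ > 0, ∀ i, δ ≤ p i := by
  cases isEmpty_or_nonempty ι with
  | inl _ => exact ⟨1, one_pos, isEmptyElim⟩
  | inr _ =>
    have hp_tendsto : Tendsto p cofinite atTop := by
      simpa using
        tendsto_neg_atBot_iff.1 (tendsto_exp_comp_nhds_zero.1 hsum.tendsto_cofinite_zero)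
    obtain ⟨i₀, hi₀⟩ := hp_tendsto.exists_forall_le
    exact ⟨p i₀, hp i₀, hi₀⟩

lemma heatTrace_le_exp_mul_heatTrace_one (hsum : ∀ t, 0 < t → Summable fun i ↦ rexp (-t * p i))
    {δ : ℝ} (hδ : ∀ i, δ ≤ p i) {t : ℝ} (ht : 1 ≤ t) :
    heatTrace p t ≤ rexp (-δ * (t - 1)) * heatTrace p 1 := by
  rw [heatTrace, heatTrace, ← tsum_mul_left]
  refine (hsum t (by linarith)).tsum_le_tsum (fun i ↦ ?_) ((hsum 1 one_pos).mul_left _)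
  rw [← exp_add]
  gcongr
  nlinarith [hδ i]

lemma integrableOn_Ioo_rpow_mul_heatTrace [Countable ι] {C a σ : ℝ}
    (hθ : ∀ t ∈ Ioc (0 : ℝ) 1, heatTrace p t ≤ C * t ^ (-a)) (haσ : a < σ) :
    IntegrableOn (fun t ↦ t ^ (σ - 1) * heatTrace p t) (Ioo 0 1) := by
  have hbound : IntegrableOn (fun t : ℝ ↦ C * t ^ (σ - 1 - a)) (Ioo 0 1) :=
    ((intervalIntegral.integrableOn_Ioo_rpow_iff one_pos).2 (by linarith)).const_mul C
  refine hbound.mono'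
    ((measurable_id.pow_const _).mul (measurable_heatTrace p)).aestronglyMeasurable ?_
  filter_upwards [ae_restrict_mem measurableSet_Ioo] with t ⟨ht0, ht1⟩
  rw [norm_of_nonneg (mul_nonneg (rpow_nonneg ht0.le _) (heatTrace_nonneg p t))]
  calc t ^ (σ - 1) * heatTrace p t ≤ t ^ (σ - 1) * (C * t ^ (-a)) := by
        gcongr
        exact hθ t ⟨ht0, ht1.le⟩
    _ = C * t ^ (σ - 1 - a) := by
        rw [sub_eq_add_neg (σ - 1), rpow_add ht0]
        ring

lemma integrableOn_Ici_rpow_mul_heatTrace [Countable ι] (hp : ∀ i, 0 < p i)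
    (hsum : ∀ t, 0 < t → Summable fun i ↦ rexp (-t * p i)) {σ : ℝ} (hσ : 0 < σ) :
    IntegrableOn (fun t ↦ t ^ (σ - 1) * heatTrace p t) (Ici 1) := by
  obtain ⟨δ, hδ, hδp⟩ := exists_pos_forall_le_of_summable_exp hp (by simpa using hsum 1 one_pos)
  have hbound : IntegrableOn
      (fun t : ℝ ↦ rexp δ * heatTrace p 1 * (t ^ (σ - 1) * rexp (-δ * t ^ (1 : ℝ)))) (Ici 1) :=
    ((integrableOn_rpow_mul_exp_neg_mul_rpow (by linarith) one_pos hδ).mono_set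
      (Ici_subset_Ioi.2 one_pos)).const_mul _
  refine hbound.mono'
    ((measurable_id.pow_const _).mul (measurable_heatTrace p)).aestronglyMeasurable ?_
  filter_upwards [ae_restrict_mem measurableSet_Ici] with t (ht : 1 ≤ t)
  rw [norm_of_nonneg (mul_nonneg (rpow_nonneg (by linarith) _) (heatTrace_nonneg p t)), rpow_one]
  calc t ^ (σ - 1) * heatTrace p t ≤ t ^ (σ - 1) * (rexp (-δ * (t - 1)) * heatTrace p 1) := by
        gcongr
        exact heatTrace_le_exp_mul_heatTrace_one hsum hδp ht
    _ = rexp δ * heatTrace p 1 * (t ^ (σ - 1) * rexp (-δ * t)) := by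
        rw [show -δ * (t - 1) = δ + -δ * t by ring, exp_add]
        ring

lemma integrableOn_rpow_mul_heatTrace [Countable ι] (hp : ∀ i, 0 < p i)
    (hsum : ∀ t, 0 < t → Summable fun i ↦ rexp (-t * p i)) {C a σ : ℝ}
    (hθ : ∀ t ∈ Ioc (0 : ℝ) 1, heatTrace p t ≤ C * t ^ (-a)) (haσ : a < σ) (hσ : 0 < σ) :
    IntegrableOn (fun t ↦ t ^ (σ - 1) * heatTrace p t) (Ioi 0) := by
  rw [← Ioo_union_Ici_eq_Ioi zero_lt_one]
  exact (integrableOn_Ioo_rpow_mul_heatTrace hθ haσ).union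
    (integrableOn_Ici_rpow_mul_heatTrace hp hsum hσ)

lemma summable_rpow_neg_of_integrableOn (hp : ∀ i, 0 < p i)
    (hsum : ∀ t, 0 < t → Summable fun i ↦ rexp (-t * p i)) {σ : ℝ} (hσ : 0 < σ)
    (hint : IntegrableOn (fun t ↦ t ^ (σ - 1) * heatTrace p t) (Ioi 0)) :
    Summable fun i ↦ p i ^ (-σ) := by
  have hterm : ∀ i, IntegrableOn (fun t ↦ t ^ (σ - 1) * rexp (-t * p i)) (Ioi 0) := fun i ↦ by
    simpa [mul_comm] using integrableOn_rpow_mul_exp_neg_mul_rpow (by linarith) one_pos (hp i)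
  have hvalue : ∀ i, ∫ t in Ioi 0, t ^ (σ - 1) * rexp (-t * p i) = Gamma σ * p i ^ (-σ) := by
    intro i
    simp_rw [neg_mul, mul_comm _ (p i)]
    rw [integral_rpow_mul_exp_neg_mul_Ioi hσ (hp i), one_div, inv_rpow (hp i).le,
      ← rpow_neg (hp i).le, mul_comm]
  refine summable_of_sum_le (c := (Gamma σ)⁻¹ * ∫ t in Ioi 0, t ^ (σ - 1) * heatTrace p t)
    (fun i ↦ (rpow_pos_of_pos (hp i) _).le) fun u ↦ ?_
  rw [le_inv_mul_iff₀ (Gamma_pos_of_pos hσ)]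
  calc Gamma σ * ∑ i ∈ u, p i ^ (-σ)
      = ∫ t in Ioi 0, ∑ i ∈ u, t ^ (σ - 1) * rexp (-t * p i) := by
        rw [integral_finsetSum u fun i _ ↦ hterm i, Finset.mul_sum]
        exact Finset.sum_congr rfl fun i _ ↦ (hvalue i).symm
    _ ≤ ∫ t in Ioi 0, t ^ (σ - 1) * heatTrace p t := by
        refine setIntegral_mono_on (integrable_finsetSum u fun i _ ↦ hterm i) hint
          measurableSet_Ioi fun t ht ↦ ?_
        rw [← Finset.mul_sum]
        exact mul_le_mul_of_nonneg_left ((hsum t ht).sum_le_tsum u fun i _ ↦ (exp_pos _).le)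
          (rpow_nonneg (le_of_lt ht) _)

lemma integrableOn_cpow_mul_heatTrace [Countable ι] {s : ℂ}
    (hint : IntegrableOn (fun t ↦ t ^ (s.re - 1) * heatTrace p t) (Ioi 0)) :
    IntegrableOn (fun t : ℝ ↦ (t : ℂ) ^ (s - 1) * heatTrace p t) (Ioi 0) := by
  have hcpow : AEStronglyMeasurable (fun t : ℝ ↦ (t : ℂ) ^ (s - 1)) (volume.restrict (Ioi 0)) :=
    (Complex.continuous_ofReal.continuousOn.cpow_const fun t (ht : 0 < t) ↦
      Complex.ofReal_mem_slitPlane.2 ht).aestronglyMeasurable measurableSet_Ioi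
  refine hint.mono' (hcpow.mul
    (Complex.measurable_ofReal.comp (measurable_heatTrace p)).aestronglyMeasurable) ?_
  filter_upwards [ae_restrict_mem measurableSet_Ioi] with t (ht : 0 < t)
  rw [norm_mul, Complex.norm_real, norm_of_nonneg (heatTrace_nonneg p t),
    Complex.norm_cpow_eq_rpow_re_of_pos ht, Complex.sub_re, Complex.one_re]

lemma tsum_cpow_neg_eq_Gamma_inv_mul_integral [Countable ι] (hp : ∀ i, 0 < p i)
    (hsum : ∀ t, 0 < t → Summable fun i ↦ rexp (-t * p i)) {s : ℂ} (hs : 0 < s.re)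
    (hsummable : Summable fun i ↦ p i ^ (-s.re)) :
    ∑' i, (p i : ℂ) ^ (-s) =
      (Complex.Gamma s)⁻¹ * ∫ t in Ioi (0 : ℝ), (t : ℂ) ^ (s - 1) * heatTrace p t := by
  have hF : ∀ t ∈ Ioi (0 : ℝ),
      HasSum (fun i ↦ 1 * (rexp (-p i * t) : ℂ)) (heatTrace p t : ℂ) := fun t ht ↦ by
    simpa [heatTrace, mul_comm] using Complex.hasSum_ofReal.2 (hsum t ht).hasSum
  have hmellin := (hasSum_mellin (fun i ↦ Or.inr (hp i)) hs hF
    (by simpa [rpow_neg (hp _).le] using hsummable)).mul_left (Complex.Gamma s)⁻¹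
  rw [show ∫ t in Ioi (0 : ℝ), (t : ℂ) ^ (s - 1) * heatTrace p t =
      mellin (fun t ↦ (heatTrace p t : ℂ)) s from rfl, ← hmellin.tsum_eq]
  refine tsum_congr fun i ↦ ?_
  rw [Complex.cpow_neg, mul_one, ← mul_div_assoc,
    inv_mul_cancel₀ (Complex.Gamma_ne_zero_of_re_pos hs), one_div]

end HeatTrace

theorem stmt_5_general (lam : ℕ → ℝ) (hlam : ∀ j, 0 ≤ lam j)
    (hsum : ∀ t : ℝ, 0 < t → Summable fun j => Real.exp (-t * lam j))
    (k : ℕ)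
    (hk : Nat.card {j : ℕ | lam j = 0} = k)
    (n r : ℝ) (hn : 0 < n) (hr : 0 < r) (C : ℝ)
    (hθ : ∀ t ∈ Set.Ioc (0 : ℝ) 1,
      (∑' j, Real.exp (-t * lam j)) ≤ C * t ^ (-(n / r))) :
    ∀ z : ℂ, n / r < z.re →
      (Summable fun j : {j : ℕ // 0 < lam j} => ‖(lam j.1 : ℂ) ^ (-z)‖) ∧
      IntegrableOn (fun t : ℝ =>
        (t : ℂ) ^ (z - 1) * (((∑' j, Real.exp (-t * lam j)) - k : ℝ) : ℂ)) (Set.Ioi 0) ∧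
      ∑' j : {j : ℕ // 0 < lam j}, (lam j.1 : ℂ) ^ (-z)
        = (Complex.Gamma z)⁻¹ * ∫ t in Set.Ioi (0 : ℝ),
            (t : ℂ) ^ (z - 1) * (((∑' j, Real.exp (-t * lam j)) - k : ℝ) : ℂ) := by
  intro z hz
  let p : {j : ℕ // 0 < lam j} → ℝ := fun j ↦ lam j
  have hkernel : ∀ t, 0 < t → heatTrace p t = (∑' j, rexp (-t * lam j)) - k := fun t ht ↦ by
    rw [← hk]
    exact (hasSum_exp_pos_heatTrace_sub_card hlam (hsum t ht)).tsum_eq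
  have hsum_p : ∀ t, 0 < t → Summable fun i ↦ rexp (-t * p i) := fun t ht ↦ (hsum t ht).subtype _
  have hθ_p : ∀ t ∈ Ioc (0 : ℝ) 1, heatTrace p t ≤ C * t ^ (-(n / r)) := fun t ht ↦ by
    linarith [hkernel t ht.1, hθ t ht, k.cast_nonneg (α := ℝ)]
  have hz_pos : 0 < z.re := (div_pos hn hr).trans hz
  have hint := integrableOn_rpow_mul_heatTrace (fun i ↦ i.2) hsum_p hθ_p hz hz_pos
  have hsummable := summable_rpow_neg_of_integrableOn (fun i ↦ i.2) hsum_p hz_pos hint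
  have hintegrand : EqOn (fun t : ℝ ↦ (t : ℂ) ^ (z - 1) * heatTrace p t)
      (fun t ↦ (t : ℂ) ^ (z - 1) * (((∑' j, rexp (-t * lam j)) - k : ℝ) : ℂ)) (Ioi 0) :=
    fun t ht ↦ by simp only [hkernel t ht]
  refine ⟨hsummable.congr fun i ↦ ?_,
    (integrableOn_cpow_mul_heatTrace hint).congr_fun hintegrand measurableSet_Ioi, ?_⟩
  · rw [Complex.norm_cpow_eq_rpow_re_of_pos i.2, Complex.neg_re]
  · rw [tsum_cpow_neg_eq_Gamma_inv_mul_integral (fun i ↦ i.2) hsum_p hz_pos hsummable,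
      setIntegral_congr_fun measurableSet_Ioi hintegrand]

/-- Mellin-transform identity for the spectral zeta function: for a non-negative
eigenvalue sequence `λ_j` whose heat trace `θ(t) = Σ_j e^{-t λ_j}` converges and
satisfies `θ(t) ≤ C t^{-n/r}` on `(0,1]`, and `k` the (necessarily finite) number of
zero eigenvalues, one has, for `Re z > n/r`, absolute convergence of `Σ_{λ_j > 0} λ_j^{-z}`,
integrability of `t ↦ t^{z-1}(θ(t) - k)` on `(0, ∞)`, and
`Σ_{λ_j > 0} λ_j^{-z} = Γ(z)⁻¹ ∫_0^∞ t^{z-1}(θ(t) - k) dt`. -/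
theorem stmt_5 (lam : ℕ → ℝ) (hlam : ∀ j, 0 ≤ lam j)
    (hsum : ∀ t : ℝ, 0 < t → Summable fun j => Real.exp (-t * lam j))
    (k : ℕ) (hkfin : {j : ℕ | lam j = 0}.Finite)
    (hk : Nat.card {j : ℕ | lam j = 0} = k)
    (n r : ℝ) (hn : 0 < n) (hr : 0 < r) (C : ℝ) (hC : 0 ≤ C)
    (hθ : ∀ t ∈ Set.Ioc (0 : ℝ) 1,
      (∑' j, Real.exp (-t * lam j)) ≤ C * t ^ (-(n / r))) :
    ∀ z : ℂ, n / r < z.re →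
      (Summable fun j : {j : ℕ // 0 < lam j} => ‖(lam j.1 : ℂ) ^ (-z)‖) ∧
      IntegrableOn (fun t : ℝ =>
        (t : ℂ) ^ (z - 1) * (((∑' j, Real.exp (-t * lam j)) - k : ℝ) : ℂ)) (Set.Ioi 0) ∧
      ∑' j : {j : ℕ // 0 < lam j}, (lam j.1 : ℂ) ^ (-z)
        = (Complex.Gamma z)⁻¹ * ∫ t in Set.Ioi (0 : ℝ),
            (t : ℂ) ^ (z - 1) * (((∑' j, Real.exp (-t * lam j)) - k : ℝ) : ℂ) :=
  stmt_5_general lam hlam hsum k hk n r hn hr C hθ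
end

section
/- Let λ : ℕ → ℝ with λ_j ≥ 0 for all j, and suppose that for every t > 0 the series θ(t) := Σ_j exp(−t λ_j) converges. Then the set {j : λ_j = 0} is finite with cardinality k, the function θ(t) tends to k as t → ∞, and moreover there exist ε > 0 and C ≥ 0 such that |θ(t) − k| ≤ C·exp(−ε t) for all t ≥ 1. -/
/-!
Summability of `Σ e^{-λ_j}` forces `λ_j → ∞` along the cofinite filter, so only finitely many
`λ_j` vanish and the non-zero ones are bounded below by some `ε > 0`. The zero eigenvalues
contribute exactly `k` to `θ(t)`, and for `t ≥ 1` every other term satisfies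
`e^{-tλ} ≤ e^{ε} e^{-εt} e^{-λ}`; summing over the non-zero eigenvalues bounds `θ(t) - k`
by a constant times `e^{-εt}`.
-/

open Filter Topology Real

section HeatTrace

variable {ι : Type*} {lam : ι → ℝ}

theorem tendsto_cofinite_atTop_of_summable_exp_neg (h : Summable fun j => exp (-lam j)) :
    Tendsto lam cofinite atTop :=
  tendsto_neg_atBot_iff.mp (tendsto_exp_comp_nhds_zero.mp h.tendsto_cofinite_zero)

theorem Filter.Tendsto.exists_pos_le_of_ne_zero (hlam : ∀ j, 0 ≤ lam j)
    (h : Tendsto lam cofinite atTop) : ∃ ε > 0, ∀ j, lam j ≠ 0 → ε ≤ lam j := by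
  have hfin : {j | 0 < lam j ∧ lam j ≤ 1}.Finite :=
    (eventually_cofinite.mp (h.eventually_gt_atTop 1)).subset fun j hj => not_lt.mpr hj.2
  have hsmall : ∀ᶠ ε in 𝓝[>] (0 : ℝ), ∀ j ∈ {j | 0 < lam j ∧ lam j ≤ 1}, ε ≤ lam j :=
    hfin.eventually_all.2 fun j hj => (eventually_le_nhds hj.1).filter_mono nhdsWithin_le_nhds
  obtain ⟨ε, hεsmall, hε1, hεpos⟩ :=
    (hsmall.and (((eventually_le_nhds one_pos).filter_mono nhdsWithin_le_nhds).and
      self_mem_nhdsWithin)).exists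
  refine ⟨ε, hεpos, fun j hj => ?_⟩
  rcases le_or_gt (lam j) 1 with hj1 | hj1
  · exact hεsmall j ⟨(hlam j).lt_of_ne' hj, hj1⟩
  · linarith

theorem tsum_exp_neg_mul_sub_ncard {t : ℝ} (h : Summable fun j => exp (-t * lam j)) :
    ∑' j, exp (-t * lam j) - ({j | lam j = 0}.ncard : ℝ) =
      ∑' j : ↥{j | lam j = 0}ᶜ, exp (-t * lam j) := by
  have hzero : ∑' j : ↥{j | lam j = 0}, exp (-t * lam j) = ({j | lam j = 0}.ncard : ℝ) := by
    rw [tsum_congr fun j : ↥{j | lam j = 0} => by rw [j.2, mul_zero, exp_zero], tsum_const,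
      Nat.card_coe_set_eq, nsmul_one]
  rw [← h.tsum_subtype_add_tsum_subtype_compl {j | lam j = 0}, hzero, add_sub_cancel_left]

theorem exp_neg_mul_le_of_le {ε l t : ℝ} (hl : ε ≤ l) (ht : 1 ≤ t) :
    exp (-t * l) ≤ exp ε * exp (-ε * t) * exp (-l) := by
  rw [← exp_add, ← exp_add, exp_le_exp]
  nlinarith

theorem tsum_exp_neg_mul_le {ε t : ℝ} (hε : ∀ j, lam j ≠ 0 → ε ≤ lam j) (ht : 1 ≤ t)
    (h₁ : Summable fun j => exp (-lam j)) (ht' : Summable fun j => exp (-t * lam j)) :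
    ∑' j : ↥{j | lam j = 0}ᶜ, exp (-t * lam j) ≤
      (exp ε * ∑' j : ↥{j | lam j = 0}ᶜ, exp (-lam j)) * exp (-ε * t) := by
  calc ∑' j : ↥{j | lam j = 0}ᶜ, exp (-t * lam j)
      ≤ ∑' j : ↥{j | lam j = 0}ᶜ, exp ε * exp (-ε * t) * exp (-lam j) :=
        (ht'.subtype _).tsum_le_tsum (fun j => exp_neg_mul_le_of_le (hε j j.2) ht)
          ((h₁.subtype _).mul_left _)
    _ = (exp ε * ∑' j : ↥{j | lam j = 0}ᶜ, exp (-lam j)) * exp (-ε * t) := by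
        rw [tsum_mul_left]
        ring

end HeatTrace

theorem tendsto_of_abs_sub_le_mul_exp {f : ℝ → ℝ} {a C ε : ℝ} (hε : 0 < ε)
    (h : ∀ t, 1 ≤ t → |f t - a| ≤ C * exp (-ε * t)) : Tendsto f atTop (𝓝 a) := by
  have hdecay : Tendsto (fun t => C * exp (-ε * t)) atTop (𝓝 0) := by
    simpa using (tendsto_exp_atBot.comp
      (tendsto_id.const_mul_atTop_of_neg (neg_neg_of_pos hε))).const_mul C
  refine tendsto_sub_nhds_zero_iff.mp (squeeze_zero_norm' ?_ hdecay)
  filter_upwards [eventually_ge_atTop 1] with t ht using h t ht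

/-- Heat-trace form of Lemma 5.2: if the heat trace `θ(t) = Σ_j e^{-t λ_j}` of a
non-negative eigenvalue sequence converges for all `t > 0`, then the set of zero
eigenvalues is finite with cardinality `k`, `θ(t) → k` as `t → ∞`, and in fact
`|θ(t) - k| ≤ C e^{-ε t}` for `t ≥ 1`, for some `ε > 0` and `C ≥ 0`. -/
theorem stmt_8 (lam : ℕ → ℝ) (hlam : ∀ j, 0 ≤ lam j)
    (hsum : ∀ t : ℝ, 0 < t → Summable fun j => Real.exp (-t * lam j)) :
    {j : ℕ | lam j = 0}.Finite ∧
    Tendsto (fun t : ℝ => ∑' j, Real.exp (-t * lam j)) atTop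
      (nhds ({j : ℕ | lam j = 0}.ncard : ℝ)) ∧
    ∃ ε > (0 : ℝ), ∃ C : ℝ, 0 ≤ C ∧ ∀ t : ℝ, 1 ≤ t →
      |(∑' j, Real.exp (-t * lam j)) - ({j : ℕ | lam j = 0}.ncard : ℝ)|
        ≤ C * Real.exp (-ε * t) := by
  have h₁ : Summable fun j => exp (-lam j) := by simpa using hsum 1 one_pos
  have hlim := tendsto_cofinite_atTop_of_summable_exp_neg h₁
  have hfin : {j | lam j = 0}.Finite :=
    (eventually_cofinite.mp (hlim.eventually_gt_atTop 0)).subset fun j hj => not_lt.mpr hj.le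
  obtain ⟨ε, hεpos, hε⟩ := hlim.exists_pos_le_of_ne_zero hlam
  have hbound : ∀ t : ℝ, 1 ≤ t → |∑' j, exp (-t * lam j) - ({j | lam j = 0}.ncard : ℝ)| ≤
      (exp ε * ∑' j : ↥{j | lam j = 0}ᶜ, exp (-lam j)) * exp (-ε * t) := by
    intro t ht
    have ht' := hsum t (one_pos.trans_le ht)
    rw [tsum_exp_neg_mul_sub_ncard ht', abs_of_nonneg (tsum_nonneg fun _ => (exp_pos _).le)]
    exact tsum_exp_neg_mul_le hε ht h₁ ht'
  exact ⟨hfin, tendsto_of_abs_sub_le_mul_exp hεpos hbound, ε, hεpos, _,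
    mul_nonneg (exp_pos ε).le (tsum_nonneg fun _ => (exp_pos _).le), hbound⟩
end

section
/- Let E and F be finite-dimensional complex inner product spaces and let D : E →L[ℂ] F be a linear map with adjoint D* : F →L[ℂ] E. Then for every t ∈ ℝ, trace(exp(−t • (D* ∘ D))) − trace(exp(−t • (D ∘ D*))) = (dim ker D : ℂ) − (dim ker D* : ℂ), where exp denotes the exponential in the algebras of endomorphisms of E and of F. -/
/-!
Since `tr ((a ∘ b) ^ (n + 1)) = tr ((b ∘ a) ^ (n + 1))`, the exponential series of
`tr (exp (a ∘ b)) - tr (exp (b ∘ a))` vanishes beyond its constant term `dim E - dim F`.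
Taking `a = -t • D*` and `b = D`, it remains to see that
`dim E - dim F = dim ker D - dim ker D*`, which is rank–nullity for `D` and `D*`
together with `rank D = rank D*`.
-/

open LinearMap Module NormedSpace
open scoped Nat

namespace LinearMap

theorem comp_pow_succ {R M N : Type*} [Semiring R] [AddCommMonoid M] [Module R M]
    [AddCommMonoid N] [Module R N] (f : M →ₗ[R] N) (g : N →ₗ[R] M) (n : ℕ) :
    (g ∘ₗ f) ^ (n + 1) = g ∘ₗ (((f ∘ₗ g) ^ n) ∘ₗ f) := by
  induction n with
  | zero => rfl
  | succ n ih =>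
    rw [pow_succ, ih, pow_succ]
    rfl

theorem trace_comp_pow_succ_comm {R M N : Type*} [CommRing R] [AddCommGroup M] [Module R M]
    [AddCommGroup N] [Module R N] [Module.Free R M] [Module.Finite R M] [Module.Free R N]
    [Module.Finite R N] (f : M →ₗ[R] N) (g : N →ₗ[R] M) (n : ℕ) :
    trace R M ((g ∘ₗ f) ^ (n + 1)) = trace R N ((f ∘ₗ g) ^ (n + 1)) := by
  rw [comp_pow_succ, trace_comp_comm', comp_assoc, pow_succ]
  rfl

end LinearMap

section Exp

variable {𝕜 E F : Type*} [RCLike 𝕜]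
  [NormedAddCommGroup E] [NormedSpace 𝕜 E] [FiniteDimensional 𝕜 E]
  [NormedAddCommGroup F] [NormedSpace 𝕜 F] [FiniteDimensional 𝕜 F]

theorem hasSum_trace_exp (A : E →L[𝕜] E) :
    HasSum (fun n ↦ (n !⁻¹ : 𝕜) • trace 𝕜 E ((A : E →ₗ[𝕜] E) ^ n))
      (trace 𝕜 E ((exp A : E →L[𝕜] E) : E →ₗ[𝕜] E)) := by
  have := FiniteDimensional.complete 𝕜 (E →L[𝕜] E)
  let τ : (E →L[𝕜] E) →L[𝕜] 𝕜 :=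
    ((trace 𝕜 E).comp (ContinuousLinearMap.coeLM 𝕜)).toContinuousLinearMap
  simpa [τ, ContinuousLinearMap.toLinearMap_pow] using (exp_series_hasSum_exp' (𝕂 := 𝕜) A).mapL τ

theorem trace_exp_comp_sub_trace_exp_comp (a : F →L[𝕜] E) (b : E →L[𝕜] F) :
    trace 𝕜 E ((exp (a ∘L b) : E →L[𝕜] E) : E →ₗ[𝕜] E)
        - trace 𝕜 F ((exp (b ∘L a) : F →L[𝕜] F) : F →ₗ[𝕜] F)
      = finrank 𝕜 E - finrank 𝕜 F := by
  have hdiff := (hasSum_trace_exp (a ∘L b)).sub (hasSum_trace_exp (b ∘L a))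
  refine hdiff.unique (hasSum_single 0 fun n hn ↦ ?_) |>.trans ?_
  · obtain ⟨m, rfl⟩ := Nat.exists_eq_add_one_of_ne_zero hn
    rw [ContinuousLinearMap.toLinearMap_comp, ContinuousLinearMap.toLinearMap_comp,
      trace_comp_pow_succ_comm, sub_self]
  · simp [trace_one]

end Exp

theorem LinearMap.finrank_add_finrank_ker_adjoint {𝕜 E F : Type*} [RCLike 𝕜]
    [NormedAddCommGroup E] [InnerProductSpace 𝕜 E] [FiniteDimensional 𝕜 E]
    [NormedAddCommGroup F] [InnerProductSpace 𝕜 F] [FiniteDimensional 𝕜 F] (A : E →ₗ[𝕜] F) :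
    finrank 𝕜 E + finrank 𝕜 A.adjoint.ker = finrank 𝕜 A.ker + finrank 𝕜 F := by
  rw [← A.finrank_range_add_finrank_ker, ← A.adjoint.finrank_range_add_finrank_ker,
    finrank_range_adjoint]
  ring

/-- McKean–Singer formula in the finite-dimensional setting: for a linear map `D`
between finite-dimensional complex inner product spaces, the supertrace
`tr(e^{-t D*D}) - tr(e^{-t DD*})` is independent of `t` and equals
`dim ker D - dim ker D*`. -/
theorem stmt_9 {E F : Type*}
    [NormedAddCommGroup E] [InnerProductSpace ℂ E] [FiniteDimensional ℂ E]
    [NormedAddCommGroup F] [InnerProductSpace ℂ F] [FiniteDimensional ℂ F]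
    (D : E →L[ℂ] F) :
    ∀ t : ℝ,
      LinearMap.trace ℂ E
          ((NormedSpace.exp ((-(t : ℂ)) • ((ContinuousLinearMap.adjoint D).comp D)) :
            E →L[ℂ] E) : E →ₗ[ℂ] E)
        - LinearMap.trace ℂ F
          ((NormedSpace.exp ((-(t : ℂ)) • (D.comp (ContinuousLinearMap.adjoint D))) :
            F →L[ℂ] F) : F →ₗ[ℂ] F)
      = (Module.finrank ℂ (LinearMap.ker (D : E →ₗ[ℂ] F)) : ℂ)
        - (Module.finrank ℂ (LinearMap.ker ((ContinuousLinearMap.adjoint D : F →L[ℂ] E) : F →ₗ[ℂ] E)) : ℂ) := by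
  intro t
  rw [← ContinuousLinearMap.smul_comp, ← ContinuousLinearMap.comp_smul,
    trace_exp_comp_sub_trace_exp_comp, sub_eq_sub_iff_add_eq_add,
    ← ContinuousLinearMap.adjoint_toLinearMap]
  exact_mod_cast (D : E →ₗ[ℂ] F).finrank_add_finrank_ker_adjoint
end
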